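/- Let v_max > 0, D > 0, t₀ < T, and set t_f := T + D/v_max. Let x_j : ℝ → ℝ be any function, and define x* on [t₀, t_f] by x*(s) = x_j(s) − D for s ∈ [t₀, T] and x*(s) = x_j(T) − D + v_max(s − T) for s ∈ [T, t_f]. Then every function y : ℝ → ℝ that is differentiable on [t₀, t_f] with ẏ(s) ≤ v_max for all s ∈ [t₀, t_f] and that satisfies the safety constraint x_j(s) − y(s) ≥ D for all s ∈ [t₀, T], also satisfies y(s) ≤ x*(s) for all s ∈ [t₀, t_f]. -/

import Mathlib

open Set

theorem follow_truck_exactly_optimal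
    (vmax D t₀ T : ℝ) (ht : t₀ < T)
    (xj : ℝ → ℝ) :
    ∀ y : ℝ → ℝ,
      DifferentiableOn ℝ y (Set.Icc t₀ (T + D / vmax)) →
      (∀ s ∈ Set.Icc t₀ (T + D / vmax), deriv y s ≤ vmax) →
      (∀ s ∈ Set.Icc t₀ T, xj s - y s ≥ D) →
      ∀ s ∈ Set.Icc t₀ (T + D / vmax),
        y s ≤ (if s ≤ T then xj s - D else xj T - D + vmax * (s - T)) := by
  intro y hdiff hder hsafe s hs
  split_ifs with hsT
  · linarith [hsafe s ⟨hs.1, hsT⟩]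
  · have hTs : T ≤ s := (not_le.mp hsT).le
    have hsub : Icc T (T + D / vmax) ⊆ Icc t₀ (T + D / vmax) := Icc_subset_Icc_left ht.le
    have hgain : y s - y T ≤ vmax * (s - T) :=
      (convex_Icc T (T + D / vmax)).image_sub_le_mul_sub_of_deriv_le
        (hdiff.mono hsub).continuousOn
        (hdiff.mono (interior_subset.trans hsub))
        (fun x hx => hder x (hsub (interior_subset hx)))
        T ⟨le_rfl, hTs.trans hs.2⟩ s ⟨hTs, hs.2⟩ hTs
    linarith [hsafe T ⟨ht.le, le_rfl⟩]
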